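/- arXiv:1409.5878 — 3 statements merged into one kernel-verified Lean document; each statement's English description precedes it below -/
import Mathlib

section
/- Let K/k be a field extension in characteristic zero and ∂ : K → K a nonzero k-derivation. If K is the fraction field of Nil(∂) = ∪_{n≥0} ker ∂^n (i.e. ∂ is locally nilpotent in the sense of Makar-Limanov), then K is a purely transcendental extension of degree one over ker ∂; in particular there exists s ∈ K with ∂(s) = 1 and K = (ker ∂)(s). -/
/-!
An element killed by a power of `D` but not by `D` itself exists, since otherwise every quotient
`a / b` would be constant; iterating `D` on it produces `t` with `D t ≠ 0` and `D (D t) = 0`, and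
`s = t / D t` satisfies `D s = 1`. For `P` with constant coefficients, `D (P(s)) = P'(s)`, so a
root `s` of `P` is a root of `P'`, and induction on the degree makes `P` constant, hence zero.
Conversely, if `Dⁿ⁺¹ a = 0` then inductively `D a = q(s)`, and `a - Q(s)` is constant for an
antiderivative `Q` of `q`; so `Nil(D)` consists of polynomials in `s`, and `K` of their quotients.
-/

open Polynomial

theorem Function.exists_apply_ne_zero_apply_apply_eq_zero {α : Type*} [Zero α] {f : α → α}
    (h0 : f 0 = 0) {n : ℕ} {u : α} (hu : f u ≠ 0) (hn : f^[n] u = 0) :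
    ∃ t, f t ≠ 0 ∧ f (f t) = 0 := by
  induction n generalizing u with
  | zero => exact absurd (by rw [Function.iterate_zero_apply] at hn; rw [hn, h0]) hu
  | succ n ih =>
    by_cases hfu : f (f u) = 0
    · exact ⟨u, hu, hfu⟩
    · exact ih hfu hn

namespace Polynomial

variable {K : Type*} [Field K]

noncomputable def antiderivative (q : K[X]) : K[X] :=
  q.sum fun i a => monomial (i + 1) (a / (i + 1))

@[simp]
theorem coeff_antiderivative_zero (q : K[X]) : (antiderivative q).coeff 0 = 0 := by
  simp [antiderivative, Polynomial.sum_def, coeff_monomial]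

@[simp]
theorem coeff_antiderivative_succ (q : K[X]) (n : ℕ) :
    (antiderivative q).coeff (n + 1) = q.coeff n / (n + 1) := by
  simp +contextual [antiderivative, Polynomial.sum_def, coeff_monomial]

theorem derivative_antiderivative [CharZero K] (q : K[X]) : derivative (antiderivative q) = q := by
  ext n
  rw [coeff_derivative, coeff_antiderivative_succ, div_mul_cancel₀ _ (Nat.cast_add_one_ne_zero n)]

end Polynomial

namespace Derivation

section CommRing

variable {R A : Type*} [CommRing R] [CommRing A] [Algebra R A] (d : Derivation R A A)

theorem apply_eval_eq_of_apply_coeff_eq_zero {p : A[X]} (hp : ∀ i, d (p.coeff i) = 0) (s : A) :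
    d (p.eval s) = (derivative p).eval s * d s := by
  have hmap : d.mapCoeffs p = 0 := PolynomialModule.ext (Finsupp.ext fun i => by
    simpa [mapCoeffs_apply] using hp i)
  rw [apply_eval_eq, hmap, map_zero, zero_add, smul_eq_mul]

theorem apply_coeff_derivative_eq_zero {p : A[X]} (hp : ∀ i, d (p.coeff i) = 0) (i : ℕ) :
    d ((derivative p).coeff i) = 0 := by
  simp [coeff_derivative, hp]

theorem eq_zero_of_eval_eq_zero [IsAddTorsionFree A] {s : A} (hs : d s = 1) {P : A[X]}
    (hP : ∀ i, d (P.coeff i) = 0) (hPs : P.eval s = 0) : P = 0 := by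
  induction hn : P.natDegree using Nat.strong_induction_on generalizing P with
  | _ n ih =>
  have hP' : derivative P = 0 := by
    rcases Nat.eq_zero_or_pos n with rfl | hpos
    · exact derivative_eq_zero.mpr hn
    refine ih _ (hn ▸ natDegree_derivative_lt (by omega)) (d.apply_coeff_derivative_eq_zero hP)
      ?_ rfl
    simpa [hPs, hs] using (d.apply_eval_eq_of_apply_coeff_eq_zero hP s).symm
  rw [eq_C_of_derivative_eq_zero hP'] at hPs ⊢
  rw [eval_C] at hPs
  rw [hPs, map_zero]

end CommRing

section Field

variable {k K : Type*} [CommRing k] [Field K] [Algebra k K] (D : Derivation k K K)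

theorem exists_apply_eq_one {t : K} (ht : D t ≠ 0) (htt : D (D t) = 0) : ∃ s, D s = 1 :=
  ⟨t / D t, by rw [D.leibniz_div_const t _ htt, smul_eq_mul, inv_mul_cancel₀ ht]⟩

theorem apply_coeff_antiderivative_eq_zero {q : K[X]} (hq : ∀ i, D (q.coeff i) = 0) (i : ℕ) :
    D ((antiderivative q).coeff i) = 0 := by
  cases i with
  | zero => simp
  | succ i =>
    rw [coeff_antiderivative_succ, D.leibniz_div_const _ _ (by simp), hq, smul_zero]

theorem exists_eval_eq_of_iterate_eq_zero [CharZero K] {s : K} (hs : D s = 1) {n : ℕ} {a : K}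
    (ha : (⇑D)^[n] a = 0) : ∃ p : K[X], (∀ i, D (p.coeff i) = 0) ∧ a = p.eval s := by
  induction n generalizing a with
  | zero => exact ⟨0, by simp, by simpa using ha⟩
  | succ n ih =>
    obtain ⟨q, hq, hDa⟩ := ih (a := D a) ha
    set r := antiderivative q
    have hr : ∀ i, D (r.coeff i) = 0 := D.apply_coeff_antiderivative_eq_zero hq
    have hc : D (a - r.eval s) = 0 := by
      rw [map_sub, D.apply_eval_eq_of_apply_coeff_eq_zero hr, derivative_antiderivative, hs, mul_one, hDa,
        sub_self]
    refine ⟨r + C (a - r.eval s), fun i => ?_, by simp⟩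
    rw [coeff_add, map_add, hr, coeff_C]
    split_ifs <;> simp [hc]

end Field

end Derivation

/-- let ∂ be a nonzero k-derivation of a field extension K/k
(char k = 0) which is locally nilpotent in the sense of Makar-Limanov, i.e. K is the
fraction field of Nil(∂) = ∪ₙ ker ∂ⁿ (every element of K is a quotient of elements
killed by powers of ∂).  Then K is purely transcendental of degree one over
K₀ = ker ∂: there is s ∈ K with ∂(s) = 1, s transcendental over K₀, and every
element of K a rational function in s with coefficients in K₀. -/
theorem ml_lnd_gives_slice (k : Type*) [Field k] [CharZero k]
    (K : Type*) [Field K] [Algebra k K]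
    (D : Derivation k K K) (hD : D ≠ 0)
    (hfrac : ∀ x : K, ∃ a b : K, (∃ n : ℕ, (⇑D)^[n] a = 0) ∧
      (∃ n : ℕ, (⇑D)^[n] b = 0) ∧ b ≠ 0 ∧ x = a / b) :
    ∃ s : K, D s = 1 ∧
      (∀ P : Polynomial K, (∀ i : ℕ, D (P.coeff i) = 0) →
        Polynomial.eval s P = 0 → P = 0) ∧
      (∀ f : K, ∃ p q : Polynomial K,
        (∀ i : ℕ, D (p.coeff i) = 0) ∧ (∀ i : ℕ, D (q.coeff i) = 0) ∧
        Polynomial.eval s q ≠ 0 ∧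
        f = Polynomial.eval s p / Polynomial.eval s q) := by
  have : CharZero K := charZero_of_injective_algebraMap (algebraMap k K).injective
  obtain ⟨x, hx⟩ := DFunLike.ne_iff.mp hD
  obtain ⟨a, b, ha, hb, -, rfl⟩ := hfrac x
  obtain ⟨u, hu, n, hn⟩ : ∃ u, D u ≠ 0 ∧ ∃ n, (⇑D)^[n] u = 0 := by
    by_contra! h
    have hc : ∀ u, (∃ n, (⇑D)^[n] u = 0) → D u = 0 := fun u ⟨n, hn⟩ =>
      by_contra fun hu => h u hu n hn
    exact hx (by rw [D.leibniz_div_const _ _ (hc b hb), hc a ha, smul_zero, Derivation.zero_apply])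
  obtain ⟨t, ht, htt⟩ := Function.exists_apply_ne_zero_apply_apply_eq_zero D.map_zero hu hn
  obtain ⟨s, hs⟩ := D.exists_apply_eq_one ht htt
  refine ⟨s, hs, fun P => D.eq_zero_of_eval_eq_zero hs, fun f => ?_⟩
  obtain ⟨a, b, ⟨na, ha⟩, ⟨nb, hb⟩, hb0, rfl⟩ := hfrac f
  obtain ⟨p, hp, rfl⟩ := D.exists_eval_eq_of_iterate_eq_zero hs ha
  obtain ⟨q, hq, rfl⟩ := D.exists_eval_eq_of_iterate_eq_zero hs hb
  exact ⟨p, q, hp, hq, hb0, rfl⟩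
end

section
/- Let k be a field of characteristic zero. The derivation ∂ = x₁^{e₁+1}·x₂^{e₂}⋯x_n^{e_n}·∂/∂x₁ of the Laurent polynomial ring k[x₁^{±1},…,x_n^{±1}] with e₁,…,e_n ∈ ℤ and e₁ ≥ 0 induces a rationally integrable derivation of k(x₁,…,x_n) if and only if e₁ = 1. -/
/-!
Write `x₁` for the first variable and `g = x^e`. From `∂ x^v = v₁ x^(v + e)` one gets
`∂^j x₁ = ∏_{l<j} (1 + l e₁) · x₁ g^j`, hence `exp(t∂) x₁ = x₁ ∑ c_j (g t)^j` with
`c_j = ∏_{l<j} (1 + l e₁) / (l + 1)`, the Taylor coefficients of `(1 - e₁ s)^(-1/e₁)`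
(of `exp s` if `e₁ = 0`).

If `e₁ = 1` this is the geometric series `x₁ / (1 - g t)`. The other variables are constants of
`∂`, and since `exp(t∂)` is a ring homomorphism, the elements with rational exponential form a
subfield; it contains all variables and constants, so it is all of `k(x)`.

If `0 ≤ e₁ ≠ 1`, then `1 + m e₁ ≠ 0` for every integer `m`. A denominator `Q` of degree `d` for
`exp(t∂) x₁` would give `∑_{i ≤ d} b_i c_{r+i} = 0` for all large `r`. Dividing by `c_r` and
clearing denominators yields a polynomial in `r` with infinitely many roots, so it vanishes
identically; evaluating it at `-m`, for the largest `m` with `b_m ≠ 0`, gives a contradiction.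
-/

open Finset
open scoped Nat

namespace Derivation

open PowerSeries

variable {R A : Type*} [CommSemiring R] [CommSemiring A] [Algebra R A]

theorem iterate_apply_mul (D : Derivation R A A) (n : ℕ) (a b : A) :
    D^[n] (a * b) = ∑ ij ∈ antidiagonal n, n.choose ij.1 • (D^[ij.1] a * D^[ij.2] b) := by
  induction n with
  | zero => simp
  | succ n ih =>
    rw [sum_antidiagonal_choose_succ_nsmul (M := A) (fun i j => D^[i] a * D^[j] b) n]
    simp only [Function.iterate_succ_apply', ih, map_sum, map_nsmul, leibniz, smul_eq_mul,
      smul_add, sum_add_distrib]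
    congr 1
    refine sum_congr rfl fun ⟨i, j⟩ hij => ?_
    rw [n.choose_symm_of_eq_add (mem_antidiagonal.1 hij).symm, mul_comm]

theorem iterate_apply_eq_zero_of_apply_eq_zero (D : Derivation R A A) {a : A} (h : D a = 0)
    {n : ℕ} (hn : n ≠ 0) : D^[n] a = 0 := by
  obtain ⟨n, rfl⟩ := Nat.exists_eq_succ_of_ne_zero hn
  rw [Function.iterate_succ_apply, h, iterate_map_zero]

variable {K : Type*} [Field K] [CharZero K] [Algebra R K]

noncomputable def expSeries (D : Derivation R K K) : K →+* K⟦X⟧ where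
  toFun f := PowerSeries.mk fun j => (j ! : K)⁻¹ * D^[j] f
  map_one' := by
    ext (_ | j)
    · simp
    · simp [D.iterate_apply_eq_zero_of_apply_eq_zero D.map_one_eq_zero]
  map_mul' f g := by
    ext n
    rw [PowerSeries.coeff_mk, coeff_mul, iterate_apply_mul, mul_sum]
    refine sum_congr rfl fun ⟨i, j⟩ hij => ?_
    rw [HasAntidiagonal.mem_antidiagonal] at hij
    subst hij
    have : ((i + j)! : K) ≠ 0 := Nat.cast_ne_zero.2 (Nat.factorial_ne_zero _)
    simp only [PowerSeries.coeff_mk, nsmul_eq_mul, Nat.cast_add_choose]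
    field_simp
  map_zero' := by ext; simp
  map_add' f g := by ext; simp [iterate_map_add, mul_add]

variable (D : Derivation R K K)

theorem coeff_expSeries (f : K) (j : ℕ) : coeff j (D.expSeries f) = (j ! : K)⁻¹ * D^[j] f :=
  PowerSeries.coeff_mk j fun j => (j ! : K)⁻¹ * D^[j] f

theorem expSeries_of_apply_eq_zero {f : K} (h : D f = 0) : D.expSeries f = C f := by
  ext (_ | j)
  · simp [coeff_expSeries]
  · simp [coeff_expSeries, D.iterate_apply_eq_zero_of_apply_eq_zero h]

end Derivation

namespace PowerSeries

open Polynomial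

theorem sum_coeff_mul_coeff_add_eq_zero {R : Type*} [CommSemiring R] {F : R⟦X⟧} {P Q : R[X]}
    (h : (Q : R⟦X⟧) * F = P) {r : ℕ} (hr : P.natDegree < r + Q.natDegree) :
    ∑ i ∈ range (Q.natDegree + 1), Q.coeff (Q.natDegree - i) * coeff (r + i) F = 0 := by
  set d := Q.natDegree
  have hcoeff := congr(coeff (r + d) $h)
  rw [Polynomial.coeff_coe, P.coeff_eq_zero_of_natDegree_lt hr, coeff_mul,
    Nat.sum_antidiagonal_eq_sum_range_succ_mk,
    ← sum_subset (range_subset_range.2 (by omega : d + 1 ≤ r + d + 1)), ← sum_range_reflect]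
    at hcoeff
  · rw [← hcoeff]
    refine sum_congr rfl fun i hi => ?_
    rw [mem_range] at hi
    rw [Polynomial.coeff_coe, show d + 1 - 1 - i = d - i by omega,
      show r + d - (d - i) = r + i by omega]
  · intro i _ hi
    rw [mem_range, not_lt] at hi
    rw [Polynomial.coeff_coe, Q.coeff_eq_zero_of_natDegree_lt hi, zero_mul]

variable (R : Type*) [CommRing R] [IsDomain R]

def rationalSubring : Subring R⟦X⟧ where
  carrier := {F | ∃ P Q : R[X], Q ≠ 0 ∧ (Q : R⟦X⟧) * F = P}
  mul_mem' := by
    rintro F G ⟨P, Q, hQ, hF⟩ ⟨P', Q', hQ', hG⟩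
    refine ⟨P * P', Q * Q', mul_ne_zero hQ hQ', ?_⟩
    rw [Polynomial.coe_mul, Polynomial.coe_mul, ← hF, ← hG]
    ring
  one_mem' := ⟨1, 1, one_ne_zero, by simp⟩
  add_mem' := by
    rintro F G ⟨P, Q, hQ, hF⟩ ⟨P', Q', hQ', hG⟩
    refine ⟨Q' * P + Q * P', Q * Q', mul_ne_zero hQ hQ', ?_⟩
    rw [Polynomial.coe_add, Polynomial.coe_mul, Polynomial.coe_mul, Polynomial.coe_mul, ← hF, ← hG]
    ring
  zero_mem' := ⟨0, 1, one_ne_zero, by simp⟩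
  neg_mem' := by
    rintro F ⟨P, Q, hQ, hF⟩
    exact ⟨-P, Q, hQ, by rw [Polynomial.coe_neg, ← hF, mul_neg]⟩

variable {R}

theorem coe_mem_rationalSubring (P : R[X]) : (P : R⟦X⟧) ∈ rationalSubring R :=
  ⟨P, 1, one_ne_zero, by rw [Polynomial.coe_one, one_mul]⟩

theorem mem_rationalSubring_of_mul_eq_one {F G : R⟦X⟧} (hFG : F * G = 1)
    (hF : F ∈ rationalSubring R) : G ∈ rationalSubring R := by
  obtain ⟨P, Q, hQ, h⟩ := hF
  refine ⟨Q, P, ?_, by rw [← h, mul_assoc, hFG, mul_one]⟩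
  rintro rfl
  rw [Polynomial.coe_zero] at h
  exact hQ (coe_eq_zero_iff.1 ((mul_eq_zero.1 h).resolve_right (left_ne_zero_of_mul_eq_one hFG)))

theorem C_mem_rationalSubring (c : R) : C c ∈ rationalSubring R := by
  simpa using coe_mem_rationalSubring (Polynomial.C c)

theorem mk_pow_mem_rationalSubring (g : R) : mk (fun j => g ^ j) ∈ rationalSubring R := by
  have hinv : ((1 - Polynomial.C g * Polynomial.X : R[X]) : R⟦X⟧) * mk (fun j => g ^ j) = 1 := by
    rw [show mk (fun j => g ^ j) = rescale g (mk 1) by rw [rescale_mk]; simp, Polynomial.coe_sub,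
      Polynomial.coe_one, Polynomial.coe_mul, Polynomial.coe_C, Polynomial.coe_X, ← rescale_X,
      ← map_one (rescale g), ← map_sub, ← map_mul, mul_comm, mk_one_mul_one_sub_eq_one, map_one]
  exact mem_rationalSubring_of_mul_eq_one hinv (coe_mem_rationalSubring _)

end PowerSeries

section Hypergeometric

open Polynomial

variable {K : Type*} [Field K]

def hypergeomCoeff (a : K) (j : ℕ) : K :=
  ∏ l ∈ range j, (1 + l * a) / (l + 1)

theorem hypergeomCoeff_add (a : K) (r i : ℕ) :
    hypergeomCoeff a (r + i) =
      hypergeomCoeff a r * ∏ l ∈ range i, (1 + (r + l) * a) / (r + l + 1) := by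
  simp only [hypergeomCoeff, prod_range_add, Nat.cast_add]

theorem hypergeomCoeff_ne_zero [CharZero K] {a : K} (ha : ∀ m : ℤ, 1 + m * a ≠ 0) (j : ℕ) :
    hypergeomCoeff a j ≠ 0 :=
  prod_ne_zero_iff.2 fun l _ =>
    div_ne_zero (by exact_mod_cast ha l) (Nat.cast_add_one_ne_zero l)

theorem hypergeomCoeff_one [CharZero K] (j : ℕ) : hypergeomCoeff (1 : K) j = 1 :=
  prod_eq_one fun l _ => by rw [mul_one, add_comm, div_self (Nat.cast_add_one_ne_zero l)]

noncomputable def hypergeomPoly (a : K) (d i : ℕ) : K[X] :=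
  (∏ l ∈ range i, (1 + (X + C (l : K)) * C a)) * ∏ l ∈ Ico i d, (X + C (l : K) + 1)

theorem hypergeomCoeff_add_mul_prod [CharZero K] (a : K) {d i : ℕ} (hi : i ≤ d) (r : ℕ) :
    hypergeomCoeff a (r + i) * ∏ l ∈ range d, ((r : K) + l + 1) =
      hypergeomCoeff a r * (hypergeomPoly a d i).eval (r : K) := by
  have hne : ∏ l ∈ range i, ((r : K) + l + 1) ≠ 0 :=
    prod_ne_zero_iff.2 fun l _ => by exact_mod_cast Nat.succ_ne_zero (r + l)
  rw [hypergeomCoeff_add, ← prod_range_mul_prod_Ico _ hi, hypergeomPoly, eval_mul, eval_prod,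
    eval_prod, prod_div_distrib]
  simp only [eval_add, eval_mul, eval_one, eval_X, eval_C]
  generalize ∏ l ∈ range i, ((r : K) + l + 1) = B at hne ⊢
  generalize ∏ l ∈ range i, (1 + ((r : K) + l) * a) = A
  field_simp

theorem eval_neg_hypergeomPoly_of_lt (a : K) {d i j : ℕ} (hij : i < j) (hjd : j ≤ d) :
    (hypergeomPoly a d i).eval (-j : K) = 0 := by
  rw [hypergeomPoly, eval_mul, eval_prod (Ico i d)]
  refine mul_eq_zero_of_right _ (prod_eq_zero (i := j - 1) (mem_Ico.2 (by omega)) ?_)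
  rw [eval_add, eval_add, eval_X, eval_C, eval_one, Nat.cast_sub (by omega)]
  ring

theorem eval_neg_hypergeomPoly_self_ne_zero [CharZero K] {a : K}
    (ha : ∀ m : ℤ, 1 + m * a ≠ 0) (d i : ℕ) : (hypergeomPoly a d i).eval (-i : K) ≠ 0 := by
  rw [hypergeomPoly, eval_mul, eval_prod, eval_prod]
  refine mul_ne_zero (prod_ne_zero_iff.2 fun l _ => ?_) (prod_ne_zero_iff.2 fun l hl => ?_)
  · simp only [eval_add, eval_mul, eval_one, eval_X, eval_C]
    exact fun h => ha (l - i) (by push_cast; linear_combination h)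
  · have hil := (mem_Ico.1 hl).1
    simp only [eval_add, eval_X, eval_C, eval_one]
    rw [show -(i : K) + l + 1 = ((l + 1 - i : ℕ) : K) by
      push_cast [Nat.cast_sub (by omega : i ≤ l + 1)]; ring]
    exact Nat.cast_ne_zero.2 (by omega)

theorem eq_zero_of_sum_C_mul_hypergeomPoly_eq_zero [CharZero K] {a : K}
    (ha : ∀ m : ℤ, 1 + m * a ≠ 0) {d : ℕ} {b : ℕ → K}
    (h : ∑ i ∈ range (d + 1), C (b i) * hypergeomPoly a d i = 0) {i : ℕ} (hi : i ≤ d) :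
    b i = 0 := by
  classical
  by_contra hbi
  set S := (range (d + 1)).filter (b · ≠ 0)
  have hS : S.Nonempty := ⟨i, mem_filter.2 ⟨mem_range.2 (by omega), hbi⟩⟩
  obtain ⟨hm, hbm⟩ := mem_filter.1 (S.max'_mem hS)
  set m := S.max' hS
  have hmd : m ≤ d := Nat.lt_succ_iff.1 (mem_range.1 hm)
  -- evaluating at `-m` kills the terms below `m` and the maximality of `m` those above it
  have heval := congr_arg (eval (-m : K)) h
  rw [eval_finsetSum, sum_eq_single m, eval_zero, eval_mul, eval_C] at heval
  · exact mul_ne_zero hbm (eval_neg_hypergeomPoly_self_ne_zero ha d m) heval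
  · intro j hj hjm
    rcases lt_or_gt_of_ne hjm with hlt | hgt
    · rw [eval_mul, eval_neg_hypergeomPoly_of_lt a hlt hmd, mul_zero]
    · have hbj : b j = 0 := by
        by_contra hbj
        exact absurd (S.le_max' j (mem_filter.2 ⟨hj, hbj⟩)) (not_le.2 hgt)
      rw [hbj, C_0, zero_mul, eval_zero]
  · exact fun h => absurd hm h

theorem eq_zero_of_forall_sum_mul_hypergeomCoeff_eq_zero [CharZero K] {a : K}
    (ha : ∀ m : ℤ, 1 + m * a ≠ 0) {d N : ℕ} {b : ℕ → K}
    (h : ∀ r ≥ N, ∑ i ∈ range (d + 1), b i * hypergeomCoeff a (r + i) = 0) {i : ℕ}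
    (hi : i ≤ d) : b i = 0 := by
  refine eq_zero_of_sum_C_mul_hypergeomPoly_eq_zero ha (eq_zero_of_infinite_isRoot _ ?_) hi
  refine Set.infinite_of_injective_forall_mem (f := fun r : ℕ => ((N + r : ℕ) : K))
    (fun r s hrs => by simpa using hrs) fun r => ?_
  have hrel : hypergeomCoeff a (N + r) *
      (∑ i ∈ range (d + 1), C (b i) * hypergeomPoly a d i).eval ((N + r : ℕ) : K) =
      (∑ i ∈ range (d + 1), b i * hypergeomCoeff a (N + r + i)) *
        ∏ l ∈ range d, (((N + r : ℕ) : K) + l + 1) := by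
    rw [eval_finsetSum, mul_sum, sum_mul]
    refine sum_congr rfl fun i hi => ?_
    rw [eval_mul, eval_C, mul_assoc,
      hypergeomCoeff_add_mul_prod a (Nat.lt_succ_iff.1 (mem_range.1 hi))]
    ring
  rw [h (N + r) (by omega), zero_mul] at hrel
  exact (mul_eq_zero.1 hrel).resolve_left (hypergeomCoeff_ne_zero ha _)

theorem one_add_mul_intCast_ne_zero [CharZero K] {c : ℤ} (hc : 0 ≤ c)
    (hc1 : c ≠ 1) (m : ℤ) : 1 + m * (c : K) ≠ 0 := by
  intro h
  have h' : 1 + m * c = 0 := by exact_mod_cast h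
  exact hc1 (Int.eq_one_of_dvd_one hc ⟨-m, by linarith⟩)

open PowerSeries in
theorem mk_hypergeomCoeff_mul_pow_not_mem_rationalSubring [CharZero K] {a : K}
    (ha : ∀ m : ℤ, 1 + m * a ≠ 0) {g : K} (hg : g ≠ 0) :
    mk (fun j => hypergeomCoeff a j * g ^ j) ∉ rationalSubring K := by
  rintro ⟨P, Q, hQ, h⟩
  refine hQ (Polynomial.ext fun j => ?_)
  rw [Polynomial.coeff_zero]
  set d := Q.natDegree
  rcases le_or_gt j d with hj | hj
  · have hb : Q.coeff (d - (d - j)) * g ^ (d - j) = 0 := by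
      refine eq_zero_of_forall_sum_mul_hypergeomCoeff_eq_zero ha (N := P.natDegree + 1)
        (b := fun i => Q.coeff (d - i) * g ^ i) (fun r hr => ?_) (Nat.sub_le d j)
      have hrec := sum_coeff_mul_coeff_add_eq_zero h (r := r) (by omega)
      have hfactor : g ^ r * ∑ i ∈ range (d + 1),
          Q.coeff (d - i) * g ^ i * hypergeomCoeff a (r + i) = 0 := by
        rw [← hrec, mul_sum]
        refine sum_congr rfl fun i _ => ?_
        rw [coeff_mk, pow_add]
        ring
      exact (mul_eq_zero.1 hfactor).resolve_left (pow_ne_zero r hg)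
    rw [Nat.sub_sub_self hj] at hb
    exact (mul_eq_zero.1 hb).resolve_right (pow_ne_zero _ hg)
  · exact Q.coeff_eq_zero_of_natDegree_lt hj

end Hypergeometric

section LaurentMonomial

variable (k : Type*) {G K : Type*} [CommSemiring k] [AddCommGroup G] [Field K]
  [Algebra (AddMonoidAlgebra k G) K]

noncomputable def laurentMonomial (v : G) : K :=
  algebraMap (AddMonoidAlgebra k G) K (AddMonoidAlgebra.single v 1)

theorem laurentMonomial_add (v w : G) :
    laurentMonomial k (K := K) (v + w) = laurentMonomial k v * laurentMonomial k w := by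
  rw [laurentMonomial, laurentMonomial, laurentMonomial, ← map_mul,
    AddMonoidAlgebra.single_mul_single, one_mul]

theorem laurentMonomial_zero : laurentMonomial k (0 : G) = (1 : K) := by
  rw [laurentMonomial, ← AddMonoidAlgebra.one_def, map_one]

theorem laurentMonomial_nsmul (j : ℕ) (v : G) :
    laurentMonomial k (K := K) (j • v) = laurentMonomial k v ^ j := by
  induction j with
  | zero => rw [zero_smul, laurentMonomial_zero, pow_zero]
  | succ j ih => rw [succ_nsmul, laurentMonomial_add, ih, pow_succ]

theorem laurentMonomial_mul_neg (v : G) :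
    laurentMonomial k (K := K) v * laurentMonomial k (-v) = 1 := by
  rw [← laurentMonomial_add, add_neg_cancel, laurentMonomial_zero]

theorem laurentMonomial_ne_zero (v : G) : laurentMonomial k (K := K) v ≠ 0 :=
  left_ne_zero_of_mul_eq_one (laurentMonomial_mul_neg k v)

theorem laurentMonomial_neg (v : G) :
    laurentMonomial k (K := K) (-v) = (laurentMonomial k v)⁻¹ :=
  eq_inv_of_mul_eq_one_right (laurentMonomial_mul_neg k v)

end LaurentMonomial

theorem AddSubgroup.eq_top_of_single_one_mem {ι : Type*} [Fintype ι] [DecidableEq ι]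
    {H : AddSubgroup (ι → ℤ)} (h : ∀ i, Pi.single i 1 ∈ H) : H = ⊤ := by
  refine eq_top_iff.2 fun v _ => ?_
  rw [← Finset.univ_sum_single v]
  refine sum_mem fun i _ => ?_
  simpa [← Pi.single_smul'] using zsmul_mem (h i) (v i)

section MonomialDerivation

variable {k ι K R : Type*} [CommSemiring k] [Field K]
  [Algebra (AddMonoidAlgebra k (ι → ℤ)) K] [CommSemiring R] [Algebra R K]
  (D : Derivation R K K) {i₀ : ι} {e : ι → ℤ}

theorem Derivation.apply_laurentMonomial [Fintype ι] [DecidableEq ι]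
    (h₀ : D (laurentMonomial k (Pi.single i₀ 1 : ι → ℤ)) = laurentMonomial k (e + Pi.single i₀ 1))
    (h : ∀ i ≠ i₀, D (laurentMonomial k (Pi.single i 1 : ι → ℤ)) = 0) (v : ι → ℤ) :
    D (laurentMonomial k v) = v i₀ * laurentMonomial k (v + e) := by
  set x : (ι → ℤ) → K := laurentMonomial k
  have hx : ∀ v, x v ≠ 0 := laurentMonomial_ne_zero k
  have hadd : ∀ v w, x (v + w) = x v * x w := laurentMonomial_add k
  -- the logarithmic derivative `v ↦ D (x v) / x v` is additive, so it suffices to compare it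
  -- with `v ↦ v i₀ * x e` on the basis vectors
  let ψ : (ι → ℤ) →+ K := AddMonoidHom.mk' (fun v => D (x v) / x v) fun v w => by
    rw [hadd, Derivation.leibniz, smul_eq_mul, smul_eq_mul]
    field_simp [hx v, hx w]
    ring
  let χ : (ι → ℤ) →+ K :=
    (AddMonoidHom.mulRight (x e)).comp ((Int.castAddHom K).comp (Pi.evalAddMonoidHom _ i₀))
  have hψχ : ψ.eqLocus χ = ⊤ := AddSubgroup.eq_top_of_single_one_mem fun i => by
    show D (x _) / x _ = ((Pi.single i 1 : ι → ℤ) i₀ : K) * x e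
    rcases eq_or_ne i i₀ with rfl | hi
    · rw [h₀, add_comm, hadd, mul_div_cancel_left₀ _ (hx _), Pi.single_eq_same,
        Int.cast_one, one_mul]
    · rw [h i hi, zero_div, Pi.single_eq_of_ne' hi, Int.cast_zero, zero_mul]
  have hv : ψ v = χ v := (hψχ ▸ AddSubgroup.mem_top v :)
  calc D (x v) = ψ v * x v := (div_mul_cancel₀ _ (hx v)).symm
    _ = v i₀ * x (v + e) := by
      rw [hv, hadd]
      simp only [χ, AddMonoidHom.coe_comp, Function.comp_apply, Pi.evalAddMonoidHom_apply,
        Int.coe_castAddHom, AddMonoidHom.coe_mulRight]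
      ring

theorem Derivation.iterate_apply_laurentMonomial
    (hD : ∀ v, D (laurentMonomial k v) = v i₀ * laurentMonomial k (v + e)) (v : ι → ℤ) (j : ℕ) :
    D^[j] (laurentMonomial k v) =
      ((∏ l ∈ range j, (v i₀ + l * e i₀) : ℤ) : K) * laurentMonomial k (v + j • e) := by
  induction j with
  | zero => simp
  | succ j ih =>
    have hi₀ : (v + j • e) i₀ = v i₀ + j * e i₀ := by simp
    rw [Function.iterate_succ_apply', ih, ← zsmul_eq_mul, map_zsmul, hD, zsmul_eq_mul, hi₀,
      prod_range_succ, add_assoc, ← succ_nsmul, Int.cast_mul, mul_assoc]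

open PowerSeries in
theorem Derivation.expSeries_laurentMonomial_single [DecidableEq ι] [CharZero K]
    (hD : ∀ v, D (laurentMonomial k v) = v i₀ * laurentMonomial k (v + e)) :
    D.expSeries (laurentMonomial k (Pi.single i₀ 1 : ι → ℤ)) =
      C (laurentMonomial k (Pi.single i₀ 1 : ι → ℤ)) *
        PowerSeries.mk fun j => hypergeomCoeff (e i₀ : K) j * laurentMonomial k e ^ j := by
  ext j
  rw [coeff_expSeries, D.iterate_apply_laurentMonomial hD, coeff_C_mul, coeff_mk,
    laurentMonomial_add, laurentMonomial_nsmul, hypergeomCoeff, prod_div_distrib,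
    ← prod_range_add_one_eq_factorial]
  simp only [Pi.single_eq_same, Nat.cast_prod, Int.cast_prod, Int.cast_add, Int.cast_one,
    Int.cast_mul, Int.cast_natCast, Nat.cast_add, Nat.cast_one]
  ring

open PowerSeries in
theorem Derivation.expSeries_laurentMonomial_single_mem_rationalSubring_iff [DecidableEq ι]
    [CharZero K]
    (hD : ∀ v, D (laurentMonomial k v) = v i₀ * laurentMonomial k (v + e)) (he : 0 ≤ e i₀) :
    D.expSeries (laurentMonomial k (Pi.single i₀ 1 : ι → ℤ)) ∈ rationalSubring K ↔ e i₀ = 1 := by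
  set x₀ : K := laurentMonomial k (Pi.single i₀ 1 : ι → ℤ)
  rw [D.expSeries_laurentMonomial_single hD]
  constructor
  · intro hmem
    by_contra he1
    refine mk_hypergeomCoeff_mul_pow_not_mem_rationalSubring
      (one_add_mul_intCast_ne_zero he he1) (laurentMonomial_ne_zero k (K := K) e) ?_
    convert mul_mem (C_mem_rationalSubring x₀⁻¹) hmem using 1
    rw [← mul_assoc, ← map_mul, inv_mul_cancel₀ (laurentMonomial_ne_zero k _), map_one, one_mul]
  · intro he1
    simp only [he1, Int.cast_one, hypergeomCoeff_one, one_mul]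
    exact mul_mem (C_mem_rationalSubring x₀) (mk_pow_mem_rationalSubring _)

end MonomialDerivation

section RationalExpSubfield

variable {K R : Type*} [Field K] [CharZero K] [CommSemiring R] [Algebra R K]

noncomputable def Derivation.rationalExpSubfield (D : Derivation R K K) : Subfield K where
  toSubring := (PowerSeries.rationalSubring K).comap D.expSeries
  inv_mem' f hf := by
    rcases eq_or_ne f 0 with rfl | hf0
    · rwa [inv_zero]
    · refine PowerSeries.mem_rationalSubring_of_mul_eq_one ?_ hf
      rw [← map_mul, mul_inv_cancel₀ hf0, map_one]

theorem Derivation.mem_rationalExpSubfield_of_apply_eq_zero (D : Derivation R K K) {f : K}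
    (h : D f = 0) : f ∈ D.rationalExpSubfield := by
  show D.expSeries f ∈ PowerSeries.rationalSubring K
  rw [D.expSeries_of_apply_eq_zero h]
  exact PowerSeries.C_mem_rationalSubring f

end RationalExpSubfield

theorem Subfield.eq_top_of_laurentMonomial_single_mem {k ι K : Type*} [CommRing k] [Fintype ι]
    [DecidableEq ι] [Field K] [Algebra (AddMonoidAlgebra k (ι → ℤ)) K]
    [IsFractionRing (AddMonoidAlgebra k (ι → ℤ)) K] [Algebra k K]
    [IsScalarTower k (AddMonoidAlgebra k (ι → ℤ)) K] (S : Subfield K)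
    (hk : ∀ c, algebraMap k K c ∈ S)
    (hx : ∀ i, laurentMonomial k (Pi.single i 1 : ι → ℤ) ∈ S) : S = ⊤ := by
  have hmono : ∀ v : ι → ℤ, laurentMonomial k (K := K) v ∈ S := by
    let H : AddSubgroup (ι → ℤ) :=
      { carrier := {v | laurentMonomial k v ∈ S}
        add_mem' := fun hv hw => by
          rw [Set.mem_ofPred_eq, laurentMonomial_add]
          exact mul_mem hv hw
        zero_mem' := by
          rw [Set.mem_ofPred_eq, laurentMonomial_zero]
          exact one_mem S
        neg_mem' := fun hv => by
          rw [Set.mem_ofPred_eq, laurentMonomial_neg]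
          exact inv_mem hv }
    exact fun v => (AddSubgroup.eq_top_of_single_one_mem (H := H) hx ▸ AddSubgroup.mem_top v :)
  rw [eq_top_iff, ← IsFractionRing.closure_range_algebraMap (AddMonoidAlgebra k (ι → ℤ)) K,
    Subfield.closure_le]
  rintro _ ⟨p, rfl⟩
  induction p using AddMonoidAlgebra.induction_on with
  | of v => exact hmono v
  | add p q hp hq => exact map_add (algebraMap _ K) p q ▸ add_mem hp hq
  | smul c p hp =>
    rw [Algebra.smul_def, map_mul, ← IsScalarTower.algebraMap_apply]
    exact mul_mem (hk c) hp

/-- let k be of characteristic 0 and ∂ the derivation of the Laurent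
polynomial ring k[x₁^{±1},…,x_m^{±1}] (here m = n+1 variables indexed by Fin (n+1),
x₁ being the variable of index 0) with ∂x₁ = x₁^{e₁+1}x₂^{e₂}⋯x_m^{e_m} and
∂x_i = 0 for i ≥ 2, where e₁ ≥ 0.  The induced derivation on the rational function
field K = Frac(k[x₁^{±1},…]) = k(x₁,…,x_m) is rationally integrable (every formal
exponential exp(t∂)(f) ∈ K[[t]] is a quotient of polynomials in t) if and only if
e₁ = 1. -/
theorem laurent_monomial_rationally_integrable_iff (k : Type*) [Field k] [CharZero k]
    (n : ℕ) (e : Fin (n + 1) → ℤ) (he : 0 ≤ e 0)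
    (K : Type*) [Field K] [Algebra (AddMonoidAlgebra k (Fin (n + 1) → ℤ)) K]
    [IsFractionRing (AddMonoidAlgebra k (Fin (n + 1) → ℤ)) K]
    [Algebra k K] [IsScalarTower k (AddMonoidAlgebra k (Fin (n + 1) → ℤ)) K]
    (D : Derivation k K K)
    (hD1 : D (algebraMap (AddMonoidAlgebra k (Fin (n + 1) → ℤ)) K
        (AddMonoidAlgebra.single (Pi.single 0 1) (1 : k))) =
      algebraMap (AddMonoidAlgebra k (Fin (n + 1) → ℤ)) K
        (AddMonoidAlgebra.single (e + Pi.single 0 1) (1 : k)))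
    (hD2 : ∀ i : Fin (n + 1), i ≠ 0 →
      D (algebraMap (AddMonoidAlgebra k (Fin (n + 1) → ℤ)) K
          (AddMonoidAlgebra.single (Pi.single i 1) (1 : k))) = 0) :
    (∀ f : K, ∃ P Q : Polynomial K, Q ≠ 0 ∧
        (Q : PowerSeries K) *
          (PowerSeries.mk fun j => ((j.factorial : K)⁻¹) * ((⇑D)^[j] f)) = P)
      ↔ e 0 = 1 := by
  have : CharZero K := charZero_of_injective_algebraMap (algebraMap k K).injective
  have hD := D.apply_laurentMonomial hD1 hD2
  have hx₀ := D.expSeries_laurentMonomial_single_mem_rationalSubring_iff hD he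
  refine ⟨fun h => hx₀.1 (h _), fun he₁ f => ?_⟩
  have hS : D.rationalExpSubfield = ⊤ := by
    refine Subfield.eq_top_of_laurentMonomial_single_mem (k := k) (ι := Fin (n + 1)) _
      (fun c => D.mem_rationalExpSubfield_of_apply_eq_zero (D.map_algebraMap c)) fun i => ?_
    rcases eq_or_ne i 0 with rfl | hi
    · exact hx₀.2 he₁
    · exact D.mem_rationalExpSubfield_of_apply_eq_zero (hD2 i hi)
  exact (hS ▸ Subfield.mem_top f :)
end

section
/- Let k be a field of characteristic zero and ∂ : K → K a rationally integrable k-derivation of a finitely generated field extension K = k(f₁,…,f_n). Then ∂ is rationally integrable if and only if exp(t∂)(f_i) ∈ K(t) for every i = 1,…,n. -/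
/-!
Iterating the Leibniz rule gives `∂ⁿ(fg)/n! = ∑_{i+j=n} (∂ⁱf/i!)(∂ʲg/j!)`, so `exp(t∂)` is a ring
homomorphism `K → K⟦t⟧ ⊆ K⸨t⸩`. The elements `f` with `exp(t∂)(f) ∈ K(t)` therefore form the
preimage of the subfield `K(t) ⊆ K⸨t⸩`, a subfield of `K`; it contains `k` since `∂` kills `k`.
If it contains the generators `fᵢ`, it is all of `K`.
-/

open Finset Nat PowerSeries
open scoped LaurentSeries Polynomial RatFunc

namespace PowerSeries

variable {K : Type*} [Field K]

def IsRational (F : K⟦X⟧) : Prop :=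
  ∃ P Q : K[X], Q ≠ 0 ∧ (Q : K⟦X⟧) * F = P

theorem isRational_iff_mem_fieldRange {F : K⟦X⟧} :
    F.IsRational ↔ (F : K⸨X⸩) ∈ (algebraMap (RatFunc K) K⸨X⸩).fieldRange := by
  constructor
  · rintro ⟨P, Q, hQ, h⟩
    have hQ' : ((Q : K⟦X⟧) : K⸨X⸩) ≠ 0 :=
      (map_ne_zero_iff _ HahnSeries.ofPowerSeries_injective).2 (Polynomial.coe_eq_zero_iff.not.2 hQ)
    refine ⟨P / Q, ?_⟩
    rw [map_div₀, ← RatFunc.coe_coe, ← RatFunc.coe_coe, ← h, coe_mul, mul_div_cancel_left₀ _ hQ']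
  · rintro ⟨r, hr⟩
    refine ⟨r.num, r.denom, r.denom_ne_zero, HahnSeries.ofPowerSeries_injective (Γ := ℤ) ?_⟩
    rw [coe_mul, ← hr, RatFunc.coe_coe, RatFunc.coe_coe, ← map_mul, mul_comm]
    exact congrArg _
      ((eq_div_iff (RatFunc.algebraMap_ne_zero r.denom_ne_zero)).1 r.num_div_denom.symm)

end PowerSeries

namespace Derivation

section CommSemiring

variable {R A : Type*} [CommSemiring R] [CommSemiring A] [Algebra R A] (D : Derivation R A A)

theorem iterate_leibniz (n : ℕ) (a b : A) :
    (⇑D)^[n] (a * b) =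
      ∑ ij ∈ antidiagonal n, n.choose ij.1 • ((⇑D)^[ij.1] a * (⇑D)^[ij.2] b) := by
  induction n with
  | zero => simp
  | succ n ih =>
    rw [Function.iterate_succ_apply', ih, map_sum,
      sum_antidiagonal_choose_succ_nsmul (fun i j => (⇑D)^[i] a * (⇑D)^[j] b), ← sum_add_distrib]
    refine sum_congr rfl fun ij hij => ?_
    rw [Nat.choose_symm_of_eq_add (mem_antidiagonal.1 hij).symm, ← smul_add, map_nsmul, leibniz,
      Function.iterate_succ_apply', Function.iterate_succ_apply', smul_eq_mul, smul_eq_mul,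
      mul_comm ((⇑D)^[ij.2] b), add_comm]

theorem iterate_map_algebraMap {n : ℕ} (hn : n ≠ 0) (r : R) :
    (⇑D)^[n] (algebraMap R A r) = 0 := by
  obtain ⟨n, rfl⟩ := Nat.exists_eq_succ_of_ne_zero hn
  rw [Function.iterate_succ_apply, map_algebraMap, iterate_map_zero]

end CommSemiring

variable {R K : Type*} [CommSemiring R] [Field K] [CharZero K] [Algebra R K]
  (D : Derivation R K K)

/-- `exp(tD)`, with `X` playing the role of `t`. -/
noncomputable def exp : K →+* K⟦X⟧ where
  toFun a := PowerSeries.mk fun n => (n ! : K)⁻¹ * (⇑D)^[n] a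
  map_one' := by ext (_ | n) <;> simp
  map_mul' a b := by
    ext n
    simp only [coeff_mk, coeff_mul, iterate_leibniz, mul_sum]
    refine sum_congr rfl fun ij hij => ?_
    obtain ⟨i, j⟩ := ij
    obtain rfl : n = i + j := (mem_antidiagonal.1 hij).symm
    have : ((i + j)! : K) ≠ 0 := Nat.cast_ne_zero.2 (factorial_ne_zero _)
    rw [nsmul_eq_mul, Nat.cast_add_choose]
    field_simp
  map_zero' := by ext; simp
  map_add' a b := by ext; simp [iterate_map_add, mul_add]

theorem exp_apply (a : K) : D.exp a = PowerSeries.mk fun n => (n ! : K)⁻¹ * (⇑D)^[n] a :=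
  rfl

theorem exp_algebraMap (r : R) : D.exp (algebraMap R K r) = C (algebraMap R K r) := by
  ext (_ | n) <;> simp [exp_apply, iterate_map_algebraMap]

noncomputable def rationalExpSubfield_s15 : Subfield K :=
  (algebraMap (RatFunc K) K⸨X⸩).fieldRange.comap ((HahnSeries.ofPowerSeries ℤ K).comp D.exp)

theorem mem_rationalExpSubfield {a : K} : a ∈ D.rationalExpSubfield_s15 ↔ (D.exp a).IsRational :=
  isRational_iff_mem_fieldRange.symm

theorem algebraMap_mem_rationalExpSubfield (r : R) :
    algebraMap R K r ∈ D.rationalExpSubfield_s15 :=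
  D.mem_rationalExpSubfield.2
    ⟨Polynomial.C (algebraMap R K r), 1, one_ne_zero, by
      rw [exp_algebraMap, Polynomial.coe_one, one_mul, Polynomial.coe_C]⟩

end Derivation

/-- let K = k(f₁,…,f_n) be a finitely generated field extension of a
field k of characteristic zero and ∂ a k-derivation of K.  Then ∂ is rationally
integrable (exp(t∂)(f) ∈ K(t) for every f ∈ K) if and only if
exp(t∂)(fᵢ) ∈ K(t) for every i = 1,…,n.  (Membership of a power series in K(t) is
expressed as being a quotient of two polynomials in t.) -/
theorem rationally_integrable_iff_on_generators (k : Type*) [Field k] [CharZero k]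
    (K : Type*) [Field K] [Algebra k K]
    (n : ℕ) (f : Fin n → K)
    (hgen : IntermediateField.adjoin k (Set.range f) = ⊤)
    (D : Derivation k K K) :
    (∀ g : K, ∃ P Q : Polynomial K, Q ≠ 0 ∧
        (Q : PowerSeries K) *
          (PowerSeries.mk fun j => ((j.factorial : K)⁻¹) * ((⇑D)^[j] g)) = P)
      ↔ (∀ i : Fin n, ∃ P Q : Polynomial K, Q ≠ 0 ∧
        (Q : PowerSeries K) *
          (PowerSeries.mk fun j => ((j.factorial : K)⁻¹) * ((⇑D)^[j] (f i))) = P) := by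
  have := charZero_of_injective_algebraMap (algebraMap k K).injective
  refine ⟨fun h i => h (f i), fun h g => ?_⟩
  let L := D.rationalExpSubfield_s15.toIntermediateField D.algebraMap_mem_rationalExpSubfield
  have hfL : IntermediateField.adjoin k (Set.range f) ≤ L :=
    IntermediateField.adjoin_le_iff.2 <|
      Set.range_subset_iff.2 fun i => D.mem_rationalExpSubfield.2 (h i)
  exact D.mem_rationalExpSubfield.1 (hfL (hgen ▸ IntermediateField.mem_top))
end
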